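/- Every 3-leaf power graph is chordal and distance hereditary. -/

import Mathlib

/-!
Every leaf `x` of the tree has a unique neighbour `g x`, and two distinct leaves are at distance
at most 3 iff their neighbours are equal or adjacent. So `G` is the tree `T` with every vertex `w`
blown up into a clique on `g⁻¹' {w}`. An induced cycle of length `≥ 4` in such a graph can collapse
no edge without creating a chord, so it maps injectively onto a cycle of `T`. For `x ≠ y` the
`G`-distance is `max ℓ 1`, where `ℓ` is the length of the `T`-path from `g x` to `g y`; as `T` is
acyclic, that path lies in the image of any walk from `x` to `y`, so the same formula holds in every
connected induced subgraph.
-/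

open SimpleGraph

/-- A vertex of a tree is a leaf if it has exactly one neighbour. -/
def IsLeaf {V : Type} (T : SimpleGraph V) (v : V) : Prop := ∃! w, T.Adj v w

/-- A graph is distance hereditary if every connected induced subgraph preserves the
distances of the original graph. -/
def IsDistHereditary {V : Type} (G : SimpleGraph V) : Prop :=
  ∀ s : Set V, (SimpleGraph.induce s G).Connected →
    ∀ x y : s, (SimpleGraph.induce s G).dist x y = G.dist ↑x ↑y

/-- A graph is a 3-leaf power: there is a tree whose leaf set is the vertex set of the
graph, two vertices being adjacent iff the distance between the corresponding leaves is
at most 3. -/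
def IsThreeLeafPower {α : Type} (G : SimpleGraph α) : Prop :=
  ∃ (W : Type) (_ : Fintype W) (T' : SimpleGraph W), T'.IsTree ∧
    ∃ f : α → W, Function.Injective f ∧ (∀ a : α, IsLeaf T' (f a)) ∧
      (∀ w : W, IsLeaf T' w → ∃ a : α, f a = w) ∧
      ∀ x y : α, G.Adj x y ↔ (x ≠ y ∧ T'.dist (f x) (f y) ≤ 3)

namespace SimpleGraph

variable {V W : Type*} {G : SimpleGraph V} {T : SimpleGraph W}

theorem IsAcyclic.false_of_injective_of_adj_succ (hT : T.IsAcyclic) {n : ℕ} (hn : 3 ≤ n)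
    {h : ZMod n → W} (hinj : Function.Injective h) (hadj : ∀ i, T.Adj (h i) (h (i + 1))) :
    False := by
  obtain ⟨k, rfl⟩ : ∃ k, n = k + 2 := ⟨n - 2, by omega⟩
  refine isAcyclic_iff_free_cycleGraph.mp hT (k + 2) hn ⟨⟨⟨h, fun {u v} huv => ?_⟩, hinj⟩⟩
  rcases cycleGraph_adj.mp huv with e | e <;> rw [sub_eq_iff_eq_add'] at e <;> subst e
  exacts [(hadj v).symm, hadj u]

theorem eq_or_adj_of_walk_length_le_three {u v pu pv : W} (hu : ∀ w, T.Adj u w → w = pu)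
    (hv : ∀ w, T.Adj v w → w = pv) (huv : u ≠ v) (p : T.Walk u v) (hp : p.length ≤ 3) :
    pu = pv ∨ T.Adj pu pv := by
  match p, hp with
  | .nil, _ => exact absurd rfl huv
  | .cons h .nil, _ => exact .inr (hu _ h ▸ hv _ h.symm ▸ h.symm)
  | .cons h₁ (.cons h₂ .nil), _ => exact .inl ((hu _ h₁).symm.trans (hv _ h₂.symm))
  | .cons h₁ (.cons h₂ (.cons h₃ .nil)), _ => exact .inr (hu _ h₁ ▸ hv _ h₃.symm ▸ h₂)
  | .cons _ (.cons _ (.cons _ (.cons _ _))), hp => simp only [Walk.length_cons] at hp; omega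

def IsCliqueBlowup (G : SimpleGraph V) (T : SimpleGraph W) (g : V → W) : Prop :=
  ∀ x y, G.Adj x y ↔ x ≠ y ∧ (g x = g y ∨ T.Adj (g x) (g y))

namespace IsCliqueBlowup

variable {g : V → W}

theorem induce (hG : IsCliqueBlowup G T g) (s : Set V) :
    IsCliqueBlowup (G.induce s) T (g ∘ (↑)) := fun x y =>
  (hG x y).trans (and_congr_left' Subtype.coe_ne_coe)

theorem exists_walk_map (hG : IsCliqueBlowup G T g) {x y : V} (q : G.Walk x y) :
    ∃ M : T.Walk (g x) (g y), M.length ≤ q.length ∧ ∀ w ∈ M.support, w ∈ Set.range g := by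
  induction q with
  | nil => exact ⟨.nil, by simp⟩
  | @cons x z y hxz q ih =>
    obtain ⟨M, hlen, hsupp⟩ := ih
    rcases ((hG x z).mp hxz).2 with he | ha
    · refine ⟨M.copy he.symm rfl, ?_, by simpa using hsupp⟩
      simp only [Walk.length_copy, Walk.length_cons]
      omega
    · refine ⟨.cons ha M, by simpa using hlen, ?_⟩
      simp only [Walk.support_cons, List.mem_cons, forall_eq_or_imp]
      exact ⟨⟨x, rfl⟩, hsupp⟩

theorem exists_walk_lift (hG : IsCliqueBlowup G T g) {u w : W} (P : T.Walk u w)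
    (hP : ∀ v ∈ P.support, v ∈ Set.range g) {x y : V} (hx : g x = u) (hy : g y = w) :
    ∃ q : G.Walk x y, q.length ≤ max P.length 1 := by
  induction P generalizing x with
  | nil =>
    by_cases hxy : x = y
    · subst hxy
      exact ⟨.nil, by simp⟩
    · exact ⟨((hG x y).mpr ⟨hxy, .inl (hx.trans hy.symm)⟩).toWalk, by simp⟩
  | @cons u u' w hu P ih =>
    have hxv {v : V} (hv : g v = u') : G.Adj x v :=
      (hG x v).mpr ⟨fun e => hu.ne (by rw [← hx, ← hv, e]), .inr (hx ▸ hv ▸ hu)⟩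
    by_cases hw : u' = w
    · exact ⟨(hxv (hy.trans hw.symm)).toWalk, by simp⟩
    · obtain ⟨v, hv⟩ := hP u' (by simp)
      obtain ⟨q, hq⟩ := ih (fun v hv => hP v (by simp [hv])) hv hy
      have : P.length ≠ 0 := fun h0 => hw (Walk.eq_of_length_eq_zero h0)
      refine ⟨.cons (hxv hv) q, ?_⟩
      simp only [Walk.length_cons]
      omega

theorem dist_eq_max_length (hG : IsCliqueBlowup G T g) (hT : T.IsAcyclic) {x y : V}
    (hxy : x ≠ y) (hr : G.Reachable x y) {P : T.Walk (g x) (g y)} (hP : P.IsPath) :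
    G.dist x y = max P.length 1 := by
  classical
  have path_eq {M : T.Walk (g x) (g y)} : M.bypass = P :=
    congrArg Subtype.val ((hT.subsingleton_path _ _).elim ⟨_, M.bypass_isPath⟩ ⟨P, hP⟩)
  apply le_antisymm
  · obtain ⟨M, -, hM⟩ := hG.exists_walk_map hr.some
    obtain ⟨q, hq⟩ := hG.exists_walk_lift P
      (fun v hv => hM v (M.support_bypass_subset_support (path_eq ▸ hv))) rfl rfl
    exact (dist_le q).trans hq
  · obtain ⟨q, hq⟩ := hr.exists_walk_length_eq_dist
    obtain ⟨M, hM, -⟩ := hG.exists_walk_map q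
    refine max_le ?_ (hr.pos_dist_of_ne hxy)
    calc P.length = M.bypass.length := by rw [path_eq]
      _ ≤ M.length := M.length_bypass_le_length
      _ ≤ G.dist x y := hq ▸ hM

theorem not_exists_induced_cycle (hG : IsCliqueBlowup G T g) (hT : T.IsAcyclic) {n : ℕ}
    (hn : 4 ≤ n) : ¬ ∃ c : ZMod n → V, Function.Injective c ∧
      ∀ i j : ZMod n, G.Adj (c i) (c j) ↔ (j = i + 1 ∨ i = j + 1) := by
  rintro ⟨c, hc, hcyc⟩
  have natCast_ne_zero (a : ℕ) (ha : 0 < a) (han : a < n) : (a : ZMod n) ≠ 0 := fun h =>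
    absurd (Nat.le_of_dvd ha ((ZMod.natCast_eq_zero_iff a n).mp h)) (by omega)
  have one_ne : (1 : ZMod n) ≠ 0 := by exact_mod_cast natCast_ne_zero 1 (by omega) (by omega)
  have two_ne : (2 : ZMod n) ≠ 0 := by exact_mod_cast natCast_ne_zero 2 (by omega) (by omega)
  have three_ne : (3 : ZMod n) ≠ 0 := by exact_mod_cast natCast_ne_zero 3 (by omega) (by omega)
  have close (i : ZMod n) : g (c i) = g (c (i + 1)) ∨ T.Adj (g (c i)) (g (c (i + 1))) :=
    ((hG _ _).mp ((hcyc i (i + 1)).mpr (.inl rfl))).2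
  have adj_succ (i : ZMod n) : T.Adj (g (c i)) (g (c (i + 1))) := by
    refine (close i).resolve_left fun he => ?_
    -- collapsing `c i` and `c (i + 1)` would make the chord `c i — c (i + 2)`
    have chord : G.Adj (c i) (c (i + 2)) := by
      refine (hG _ _).mpr ⟨hc.ne fun e => two_ne (by linear_combination -e), ?_⟩
      simpa only [← he, add_assoc, one_add_one_eq_two] using close (i + 1)
    rcases (hcyc _ _).mp chord with e | e
    exacts [one_ne (by linear_combination e), three_ne (by linear_combination -e)]
  have inj : Function.Injective (g ∘ c) := fun i j he => by
    by_contra hij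
    rcases (hcyc i j).mp ((hG _ _).mpr ⟨hc.ne hij, .inl he⟩) with rfl | rfl
    exacts [(adj_succ i).ne he, (adj_succ j).ne he.symm]
  exact hT.false_of_injective_of_adj_succ (by omega) inj adj_succ

end IsCliqueBlowup

theorem IsCliqueBlowup.isDistHereditary {V W : Type} {G : SimpleGraph V} {T : SimpleGraph W}
    {g : V → W} (hG : IsCliqueBlowup G T g) (hT : T.IsAcyclic) : IsDistHereditary G := by
  classical
  intro s hs x y
  by_cases hxy : x = y
  · simp [hxy]
  have hr : G.Reachable x y := (hs x y).map (Embedding.induce s).toHom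
  obtain ⟨M, -⟩ := hG.exists_walk_map hr.some
  rw [(hG.induce s).dist_eq_max_length hT hxy (hs x y) M.bypass_isPath,
    hG.dist_eq_max_length hT (Subtype.coe_ne_coe.mpr hxy) hr M.bypass_isPath]

end SimpleGraph

theorem IsThreeLeafPower.exists_isCliqueBlowup {V : Type} {G : SimpleGraph V}
    (h : IsThreeLeafPower G) :
    ∃ (W : Type) (T : SimpleGraph W) (g : V → W), T.IsAcyclic ∧ G.IsCliqueBlowup T g := by
  obtain ⟨W, -, T, hT, f, hf, hleaf, -, hadj⟩ := h
  choose g hfg hg using hleaf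
  refine ⟨W, T, g, hT.isAcyclic, fun x y => (hadj x y).trans (and_congr_right fun hxy => ?_)⟩
  constructor
  · intro hd
    obtain ⟨p, hp⟩ := hT.connected.exists_walk_length_eq_dist (f x) (f y)
    exact eq_or_adj_of_walk_length_le_three (hg x) (hg y) (hf.ne hxy) p (hp ▸ hd)
  · rintro (he | ha)
    · exact (dist_le (.cons (hfg x) (.cons (he ▸ (hfg y).symm) .nil))).trans (by simp)
    · exact (dist_le (.cons (hfg x) (.cons ha (.cons (hfg y).symm .nil)))).trans (by simp)

theorem stmt19_general (V : Type) (G : SimpleGraph V)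
    (h : IsThreeLeafPower G) :
    (∀ n : ℕ, 4 ≤ n → ¬ ∃ f : ZMod n → V, Function.Injective f ∧
        ∀ i j : ZMod n, G.Adj (f i) (f j) ↔ (j = i + 1 ∨ i = j + 1)) ∧
    IsDistHereditary G := by
  obtain ⟨W, T, g, hT, hG⟩ := h.exists_isCliqueBlowup
  exact ⟨fun n hn => hG.not_exists_induced_cycle hT hn, hG.isDistHereditary hT⟩

/-- every 3-leaf power is chordal (no induced cycle of length ≥ 4) and
distance hereditary. -/
theorem stmt19 (V : Type) [Fintype V] (G : SimpleGraph V)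
    (h : IsThreeLeafPower G) :
    (∀ n : ℕ, 4 ≤ n → ¬ ∃ f : ZMod n → V, Function.Injective f ∧
        ∀ i j : ZMod n, G.Adj (f i) (f j) ↔ (j = i + 1 ∨ i = j + 1)) ∧
    IsDistHereditary G :=
  stmt19_general V G h
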